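/- (Equation (18)) For all integers n ≥ 0 and k ≥ 1, the difference ∑_{x=0}^{p^{k+1} − 1} (−1)^x [x]_q^n − ∑_{j=0}^{p−1} (−1)^j [j]_q^n is divisible by [p]_q in ℤ_p, i.e. ∑_{x=0}^{p^{k+1} − 1} (−1)^x [x]_q^n ≡ ∑_{j=0}^{p−1} (−1)^j [j]_q^n (mod [p]_q). -/
import Mathlib


/-- The `q`-analogue `[x]_q = 1 + q + ⋯ + q^(x-1)` in `ℤ_p`. -/
noncomputable def qnum {p : ℕ} [Fact p.Prime] (q : ℤ_[p]) (x : ℕ) : ℤ_[p] :=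
  ∑ l ∈ Finset.range x, q ^ l

lemma sum_range_mul' {R : Type*} [AddCommMonoid R] (f : ℕ → R) (p M : ℕ) :
    ∑ x ∈ Finset.range (M * p), f x
      = ∑ m ∈ Finset.range M, ∑ a ∈ Finset.range p, f (m * p + a) := by
  induction M with
  | zero => simp
  | succ M ih =>
      rw [Finset.sum_range_succ, ← ih, Nat.succ_mul, Finset.sum_range_add]

lemma qnum_add {p : ℕ} [Fact p.Prime] (q : ℤ_[p]) (a b : ℕ) :
    qnum q (a + b) = qnum q a + q ^ a * qnum q b := by
  unfold qnum
  rw [Finset.sum_range_add, Finset.mul_sum]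
  simp [pow_add]

lemma qnum_mul {p : ℕ} [Fact p.Prime] (q : ℤ_[p]) (m : ℕ) :
    qnum q (m * p) = (∑ i ∈ Finset.range m, (q ^ p) ^ i) * qnum q p := by
  unfold qnum
  rw [sum_range_mul' (fun x => q ^ x) p m, Finset.sum_mul]
  exact Finset.sum_congr rfl fun i _ => by
    rw [Finset.mul_sum]
    exact Finset.sum_congr rfl fun a _ => by rw [pow_add, ← pow_mul, Nat.mul_comm i p, pow_mul]

set_option synthInstance.maxHeartbeats 1000000 in
set_option maxHeartbeats 1000000 in
/-- **Equation (18).** For `n ≥ 0` and `k ≥ 1`,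
`∑_{x=0}^{p^{k+1}−1} (−1)^x [x]_q^n ≡ ∑_{j=0}^{p−1} (−1)^j [j]_q^n (mod [p]_q)`. -/
theorem eq18 (p : ℕ) [Fact p.Prime] (hp : Odd p)
    (q : ℤ_[p]) (hq : (p : ℤ_[p]) ∣ (q - 1))
    (n k : ℕ) (hk : 1 ≤ k) :
    qnum q p ∣
      (∑ x ∈ Finset.range (p ^ (k + 1)), (-1 : ℤ_[p]) ^ x * (qnum q x) ^ n)
        - ∑ j ∈ Finset.range p, (-1 : ℤ_[p]) ^ j * (qnum q j) ^ n := by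
  set I : Ideal ℤ_[p] := Ideal.span {qnum q p}
  rw [← Ideal.mem_span_singleton, ← Ideal.Quotient.eq_zero_iff_mem, map_sub, sub_eq_zero]
  set f := Ideal.Quotient.mk I
  have key : ∀ m a : ℕ, f (qnum q (m * p + a)) = f (qnum q a) := by
    intro m a
    rw [add_comm, qnum_add, map_add]
    have : f (q ^ a * qnum q (m * p)) = 0 := by
      rw [qnum_mul, ← mul_assoc, Ideal.Quotient.eq_zero_iff_mem]
      exact Ideal.mul_mem_left _ _ (Ideal.subset_span rfl)
    rw [this, add_zero]
  have hpow : p ^ (k + 1) = p ^ k * p := by ring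
  rw [hpow, sum_range_mul' (fun x => (-1 : ℤ_[p]) ^ x * (qnum q x) ^ n) p (p ^ k), map_sum]
  calc ∑ m ∈ Finset.range (p ^ k), f (∑ a ∈ Finset.range p,
          (-1 : ℤ_[p]) ^ (m * p + a) * (qnum q (m * p + a)) ^ n)
      = ∑ m ∈ Finset.range (p ^ k), (-1 : ℤ_[p] ⧸ I) ^ m *
          f (∑ a ∈ Finset.range p, (-1 : ℤ_[p]) ^ a * (qnum q a) ^ n) := by
        refine Finset.sum_congr rfl fun m _ => ?_
        rw [map_sum, map_sum, Finset.mul_sum]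
        refine Finset.sum_congr rfl fun a _ => ?_
        rw [map_mul, map_mul, map_pow, map_pow, key, pow_add, pow_mul, map_neg, map_one,
          ← pow_mul, Nat.mul_comm m p, pow_mul, hp.neg_one_pow, mul_assoc, map_pow, map_pow, map_neg, map_one]
    _ = f (∑ j ∈ Finset.range p, (-1 : ℤ_[p]) ^ j * (qnum q j) ^ n) := by
        rw [← Finset.sum_mul, neg_one_geom_sum, if_neg, one_mul]
        exact Nat.not_even_iff_odd.2 (hp.pow)
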